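/- Let 𝓑 = {𝟙, H_{X,Y}, H_{X,Z}, H_{Y,Z}, H_{X,Z}H_{X,Y}, H_{X,Y}H_{X,Z}} where H_{τ₁,τ₂} := (τ₁+τ₂)/√2. Then for every V ∈ M_2(ℂ): (i) for each P ∈ {X,Y,Z}, (1/6) Σ_{B ∈ 𝓑} (B P B†) V (B P B†)† = (1/3)(X V X + Y V Y + Z V Z); (ii) (1/6) Σ_{B ∈ 𝓑} (B 𝟙 B†) V (B 𝟙 B†)† = V. -/

import Mathlib

open Matrix

/-- The Pauli matrices `X, Y, Z`. -/
noncomputable def pauliX : Matrix (Fin 2) (Fin 2) ℂ := !![0, 1; 1, 0]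
noncomputable def pauliY : Matrix (Fin 2) (Fin 2) ℂ := !![0, -Complex.I; Complex.I, 0]
noncomputable def pauliZ : Matrix (Fin 2) (Fin 2) ℂ := !![1, 0; 0, -1]

/-- `H_{τ₁,τ₂} = (τ₁ + τ₂)/√2`. -/
noncomputable def Hmat (a b : Matrix (Fin 2) (Fin 2) ℂ) : Matrix (Fin 2) (Fin 2) ℂ :=
  ((Real.sqrt 2 : ℂ))⁻¹ • (a + b)

/-- The six unitaries `𝓑 = {𝟙, H_{X,Y}, H_{X,Z}, H_{Y,Z}, H_{X,Z}H_{X,Y}, H_{X,Y}H_{X,Z}}`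
whose conjugation action realizes the six permutations of `{X,Y,Z}` up to sign. -/
noncomputable def Bset : Fin 6 → Matrix (Fin 2) (Fin 2) ℂ :=
  ![1, Hmat pauliX pauliY, Hmat pauliX pauliZ, Hmat pauliY pauliZ,
    Hmat pauliX pauliZ * Hmat pauliX pauliY, Hmat pauliX pauliY * Hmat pauliX pauliZ]

/-!
`H_{τ₁,τ₂}` is a Hermitian unitary built from two anticommuting involutions, so conjugating by it
swaps `τ₁` and `τ₂` and negates any matrix anticommuting with both, in particular the third Pauli
matrix. Hence for each Pauli `P` the six conjugates `B P B†`, `B ∈ 𝓑`, run through `X, Y, Z`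
twice each up to sign, and the sign cancels in `Q V Q†`. Part (ii) is the unitarity of `𝓑`.
-/

section Anticommuting

variable {R : Type*} [Ring R] {a b c : R}

theorem add_mul_self_of_anticommute (ha : a * a = 1) (hb : b * b = 1)
    (hab : a * b = -(b * a)) : (a + b) * (a + b) = 1 + 1 := by
  calc (a + b) * (a + b) = a * a + b * b + (a * b + b * a) := by noncomm_ring
    _ = 1 + 1 := by rw [ha, hb, hab, neg_add_cancel, add_zero]

theorem add_mul_left_mul_add_of_anticommute (ha : a * a = 1) (hb : b * b = 1)
    (hab : a * b = -(b * a)) : (a + b) * a * (a + b) = b + b := by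
  have hbab : b * a * b = -a := by
    rw [← neg_neg (b * a), ← hab, neg_mul, mul_assoc, hb, mul_one]
  calc (a + b) * a * (a + b) = a * a * a + a * a * b + b * (a * a) + b * a * b := by
        noncomm_ring
    _ = b + b := by rw [ha, hbab, one_mul, one_mul, mul_one]; abel

theorem add_mul_of_anticommute_mul_add (ha : a * a = 1) (hb : b * b = 1)
    (hab : a * b = -(b * a)) (hca : c * a = -(a * c)) (hcb : c * b = -(b * c)) :
    (a + b) * c * (a + b) = -(c + c) := by
  have haca : a * (c * a) = -c := by rw [hca, mul_neg, ← mul_assoc, ha, one_mul]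
  have hbcb : b * (c * b) = -c := by rw [hcb, mul_neg, ← mul_assoc, hb, one_mul]
  have hcross : a * (c * b) + b * (c * a) = 0 := by
    rw [hcb, hca, mul_neg, mul_neg, ← mul_assoc, ← mul_assoc, hab, neg_mul, neg_neg,
      add_neg_cancel]
  calc (a + b) * c * (a + b) = a * (c * a) + b * (c * b) + (a * (c * b) + b * (c * a)) := by
        noncomm_ring
    _ = -(c + c) := by rw [haca, hbcb, hcross, add_zero, neg_add]

end Anticommuting

section Hmat

variable {a b c : Matrix (Fin 2) (Fin 2) ℂ}

theorem Hmat_mul_mul_Hmat (a b M : Matrix (Fin 2) (Fin 2) ℂ) :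
    Hmat a b * M * Hmat a b = (2 : ℂ)⁻¹ • ((a + b) * M * (a + b)) := by
  have hsqrt : ((Real.sqrt 2 : ℂ))⁻¹ * ((Real.sqrt 2 : ℂ))⁻¹ = (2 : ℂ)⁻¹ := by
    rw [← mul_inv, ← Complex.ofReal_mul, Real.mul_self_sqrt zero_le_two, Complex.ofReal_ofNat]
  rw [Hmat, smul_mul_assoc, mul_smul_comm, smul_mul_assoc, smul_smul, hsqrt]

theorem Hmat_comm (a b : Matrix (Fin 2) (Fin 2) ℂ) : Hmat a b = Hmat b a := by
  rw [Hmat, Hmat, add_comm]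

theorem Hmat_mul_self (ha : a * a = 1) (hb : b * b = 1) (hab : a * b = -(b * a)) :
    Hmat a b * Hmat a b = 1 := by
  calc Hmat a b * Hmat a b = Hmat a b * 1 * Hmat a b := by rw [mul_one]
    _ = 1 := by
      rw [Hmat_mul_mul_Hmat, mul_one, add_mul_self_of_anticommute ha hb hab]
      module

theorem Hmat_mul_left_mul_Hmat (ha : a * a = 1) (hb : b * b = 1) (hab : a * b = -(b * a)) :
    Hmat a b * a * Hmat a b = b := by
  rw [Hmat_mul_mul_Hmat, add_mul_left_mul_add_of_anticommute ha hb hab]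
  module

theorem Hmat_mul_right_mul_Hmat (ha : a * a = 1) (hb : b * b = 1) (hab : a * b = -(b * a)) :
    Hmat a b * b * Hmat a b = a := by
  rw [Hmat_comm]
  exact Hmat_mul_left_mul_Hmat hb ha (by rw [hab, neg_neg])

theorem Hmat_mul_mul_Hmat_of_anticommute (ha : a * a = 1) (hb : b * b = 1)
    (hab : a * b = -(b * a)) (hca : c * a = -(a * c)) (hcb : c * b = -(b * c)) :
    Hmat a b * c * Hmat a b = -c := by
  rw [Hmat_mul_mul_Hmat, add_mul_of_anticommute_mul_add ha hb hab hca hcb]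
  module

theorem isHermitian_Hmat (ha : a.IsHermitian) (hb : b.IsHermitian) :
    (Hmat a b).IsHermitian := by
  rw [IsHermitian, Hmat, conjTranspose_smul, conjTranspose_add, ha.eq, hb.eq, star_inv₀,
    Complex.star_def, Complex.conj_ofReal]

theorem Hmat_mem_unitary (ha : a.IsHermitian) (hb : b.IsHermitian) (ha₂ : a * a = 1)
    (hb₂ : b * b = 1) (hab : a * b = -(b * a)) :
    Hmat a b ∈ unitary (Matrix (Fin 2) (Fin 2) ℂ) := by
  rw [Unitary.mem_iff, star_eq_conjTranspose, (isHermitian_Hmat ha hb).eq,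
    Hmat_mul_self ha₂ hb₂ hab, and_self]

end Hmat

theorem pauliX_isHermitian : pauliX.IsHermitian := by
  ext i j; fin_cases i <;> fin_cases j <;> simp [pauliX]

theorem pauliY_isHermitian : pauliY.IsHermitian := by
  ext i j; fin_cases i <;> fin_cases j <;> simp [pauliY]

theorem pauliZ_isHermitian : pauliZ.IsHermitian := by
  ext i j; fin_cases i <;> fin_cases j <;> simp [pauliZ]

theorem pauliX_mul_self : pauliX * pauliX = 1 := by
  ext i j; fin_cases i <;> fin_cases j <;> simp [pauliX]

theorem pauliY_mul_self : pauliY * pauliY = 1 := by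
  ext i j; fin_cases i <;> fin_cases j <;> simp [pauliY]

theorem pauliZ_mul_self : pauliZ * pauliZ = 1 := by
  ext i j; fin_cases i <;> fin_cases j <;> simp [pauliZ]

theorem pauliX_mul_pauliY : pauliX * pauliY = -(pauliY * pauliX) := by
  ext i j; fin_cases i <;> fin_cases j <;> simp [pauliX, pauliY]

theorem pauliX_mul_pauliZ : pauliX * pauliZ = -(pauliZ * pauliX) := by
  ext i j; fin_cases i <;> fin_cases j <;> simp [pauliX, pauliZ]

theorem pauliY_mul_pauliZ : pauliY * pauliZ = -(pauliZ * pauliY) := by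
  ext i j; fin_cases i <;> fin_cases j <;> simp [pauliY, pauliZ]

theorem Hmat_pauliX_pauliY_conj_pauliX :
    Hmat pauliX pauliY * pauliX * Hmat pauliX pauliY = pauliY :=
  Hmat_mul_left_mul_Hmat pauliX_mul_self pauliY_mul_self pauliX_mul_pauliY

theorem Hmat_pauliX_pauliY_conj_pauliY :
    Hmat pauliX pauliY * pauliY * Hmat pauliX pauliY = pauliX :=
  Hmat_mul_right_mul_Hmat pauliX_mul_self pauliY_mul_self pauliX_mul_pauliY

theorem Hmat_pauliX_pauliY_conj_pauliZ :
    Hmat pauliX pauliY * pauliZ * Hmat pauliX pauliY = -pauliZ :=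
  Hmat_mul_mul_Hmat_of_anticommute pauliX_mul_self pauliY_mul_self pauliX_mul_pauliY
    (neg_eq_iff_eq_neg.mp pauliX_mul_pauliZ.symm) (neg_eq_iff_eq_neg.mp pauliY_mul_pauliZ.symm)

theorem Hmat_pauliX_pauliZ_conj_pauliX :
    Hmat pauliX pauliZ * pauliX * Hmat pauliX pauliZ = pauliZ :=
  Hmat_mul_left_mul_Hmat pauliX_mul_self pauliZ_mul_self pauliX_mul_pauliZ

theorem Hmat_pauliX_pauliZ_conj_pauliZ :
    Hmat pauliX pauliZ * pauliZ * Hmat pauliX pauliZ = pauliX :=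
  Hmat_mul_right_mul_Hmat pauliX_mul_self pauliZ_mul_self pauliX_mul_pauliZ

theorem Hmat_pauliX_pauliZ_conj_pauliY :
    Hmat pauliX pauliZ * pauliY * Hmat pauliX pauliZ = -pauliY :=
  Hmat_mul_mul_Hmat_of_anticommute pauliX_mul_self pauliZ_mul_self pauliX_mul_pauliZ
    (neg_eq_iff_eq_neg.mp pauliX_mul_pauliY.symm) pauliY_mul_pauliZ

theorem Hmat_pauliY_pauliZ_conj_pauliY :
    Hmat pauliY pauliZ * pauliY * Hmat pauliY pauliZ = pauliZ :=
  Hmat_mul_left_mul_Hmat pauliY_mul_self pauliZ_mul_self pauliY_mul_pauliZ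

theorem Hmat_pauliY_pauliZ_conj_pauliZ :
    Hmat pauliY pauliZ * pauliZ * Hmat pauliY pauliZ = pauliY :=
  Hmat_mul_right_mul_Hmat pauliY_mul_self pauliZ_mul_self pauliY_mul_pauliZ

theorem Hmat_pauliY_pauliZ_conj_pauliX :
    Hmat pauliY pauliZ * pauliX * Hmat pauliY pauliZ = -pauliX :=
  Hmat_mul_mul_Hmat_of_anticommute pauliY_mul_self pauliZ_mul_self pauliY_mul_pauliZ
    pauliX_mul_pauliY pauliX_mul_pauliZ

theorem mul_mul_conjTranspose_mul {n α : Type*} [Fintype n] [NonUnitalSemiring α] [StarRing α]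
    (A B M : Matrix n n α) : A * B * M * (A * B)ᴴ = A * (B * M * Bᴴ) * Aᴴ := by
  simp only [conjTranspose_mul, Matrix.mul_assoc]

theorem Bset_mem_unitary (i : Fin 6) : Bset i ∈ unitary (Matrix (Fin 2) (Fin 2) ℂ) := by
  have hXY := Hmat_mem_unitary pauliX_isHermitian pauliY_isHermitian pauliX_mul_self
    pauliY_mul_self pauliX_mul_pauliY
  have hXZ := Hmat_mem_unitary pauliX_isHermitian pauliZ_isHermitian pauliX_mul_self
    pauliZ_mul_self pauliX_mul_pauliZ
  have hYZ := Hmat_mem_unitary pauliY_isHermitian pauliZ_isHermitian pauliY_mul_self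
    pauliZ_mul_self pauliY_mul_pauliZ
  fin_cases i
  exacts [one_mem _, hXY, hXZ, hYZ, mul_mem hXZ hXY, mul_mem hXY hXZ]

/-- For every `V ∈ M₂(ℂ)`:
(i) for each `P ∈ {X,Y,Z}`,
`(1/6) Σ_{B ∈ 𝓑} (BPB†) V (BPB†)† = (1/3)(XVX + YVY + ZVZ)`;
(ii) `(1/6) Σ_{B ∈ 𝓑} (B𝟙B†) V (B𝟙B†)† = V`. -/
theorem local_clifford_twirl_identities (V : Matrix (Fin 2) (Fin 2) ℂ) :
    (∀ P : Matrix (Fin 2) (Fin 2) ℂ, (P = pauliX ∨ P = pauliY ∨ P = pauliZ) →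
      ((6 : ℂ))⁻¹ • ∑ i : Fin 6,
          (Bset i * P * (Bset i)ᴴ) * V * (Bset i * P * (Bset i)ᴴ)ᴴ
        = ((3 : ℂ))⁻¹ • (pauliX * V * pauliX + pauliY * V * pauliY + pauliZ * V * pauliZ)) ∧
    ((6 : ℂ))⁻¹ • ∑ i : Fin 6,
        (Bset i * 1 * (Bset i)ᴴ) * V * (Bset i * 1 * (Bset i)ᴴ)ᴴ
      = V := by
  constructor
  -- `mul_mul_conjTranspose_mul` is instantiated so that it splits `Bset 4` and `Bset 5` only, not
  -- the outer sandwich `(B P B†) V (B P B†)†`.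
  · rintro P (rfl | rfl | rfl) <;>
      simp only [Fin.sum_univ_six, Bset, Matrix.cons_val, one_mul, mul_one, conjTranspose_one,
        mul_mul_conjTranspose_mul (Hmat pauliX pauliZ),
        mul_mul_conjTranspose_mul (Hmat pauliX pauliY),
        (isHermitian_Hmat pauliX_isHermitian pauliY_isHermitian).eq,
        (isHermitian_Hmat pauliX_isHermitian pauliZ_isHermitian).eq,
        (isHermitian_Hmat pauliY_isHermitian pauliZ_isHermitian).eq,
        Hmat_pauliX_pauliY_conj_pauliX, Hmat_pauliX_pauliY_conj_pauliY,
        Hmat_pauliX_pauliY_conj_pauliZ, Hmat_pauliX_pauliZ_conj_pauliX,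
        Hmat_pauliX_pauliZ_conj_pauliY, Hmat_pauliX_pauliZ_conj_pauliZ,
        Hmat_pauliY_pauliZ_conj_pauliX, Hmat_pauliY_pauliZ_conj_pauliY,
        Hmat_pauliY_pauliZ_conj_pauliZ, mul_neg, neg_mul, neg_neg, conjTranspose_neg,
        pauliX_isHermitian.eq, pauliY_isHermitian.eq, pauliZ_isHermitian.eq] <;>
      module
  · simp only [mul_one, ← star_eq_conjTranspose,
      Unitary.mul_star_self_of_mem (Bset_mem_unitary _), star_one, one_mul, Finset.sum_const,
      Finset.card_univ, Fintype.card_fin]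
    module
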